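/- arXiv:1711.01130 — 2 statements merged into one kernel-verified Lean document; each statement's English description precedes it below -/
import Mathlib

section
/- Let R be a commutative ring, M an R-module, T a multiplicative subset of R consisting of non-zero-divisors on M, and m ∈ M. Then the annihilator of m ⊗ (1/1) in M ⊗_R T⁻¹R (as a T⁻¹R-module) equals the localization T⁻¹(ann_R(m)) of the annihilator of m. -/
/-!
Every ideal of a localization `R'` of `R` is the extension of its contraction to `R`, so it
suffices to compute the contraction of the annihilator of `1 ⊗ m`. Since `T⁻¹R ⊗[R] M` is the
localization of `M` at `T`, an element `r ∈ R` kills `1 ⊗ m` iff `t • r • m = 0` for some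
`t ∈ T`, and as `T` acts injectively on `M` this means `r • m = 0`.
-/

open TensorProduct

namespace IsLocalizedModule

variable {R : Type*} [CommRing R] (S : Submonoid R) (R' : Type*) [CommRing R'] [Algebra R R']
  {M M' : Type*} [AddCommGroup M] [Module R M] [AddCommGroup M'] [Module R M']
  [Module R' M'] [IsScalarTower R R' M'] (f : M →ₗ[R] M') [IsLocalizedModule S f]

theorem under_torsionOf_apply (hS : ∀ s ∈ S, ∀ x : M, s • x = 0 → x = 0) (m : M) :
    (Ideal.torsionOf R' M' (f m)).under R = Ideal.torsionOf R M m := by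
  ext r
  rw [Ideal.mem_comap, Ideal.mem_torsionOf_iff, Ideal.mem_torsionOf_iff, algebraMap_smul,
    ← map_smul, eq_zero_iff S f]
  exact ⟨fun ⟨s, hs⟩ ↦ hS s s.2 _ hs, fun h ↦ ⟨1, by rw [one_smul, h]⟩⟩

theorem torsionOf_apply_eq_map [IsLocalization S R'] (hS : ∀ s ∈ S, ∀ x : M, s • x = 0 → x = 0)
    (m : M) :
    Ideal.torsionOf R' M' (f m) = (Ideal.torsionOf R M m).map (algebraMap R R') := by
  rw [← under_torsionOf_apply S R' f hS m, IsLocalization.map_under S]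

end IsLocalizedModule

/-- If `T` consists of non-zero-divisors on `M`, then the annihilator of
`1 ⊗ m` in `T⁻¹R ⊗[R] M` (as a `T⁻¹R`-module) is the localization
`T⁻¹(ann_R m)` of the annihilator of `m`. -/
theorem torsionOf_baseChange_localization
    (R : Type*) [CommRing R] (M : Type*) [AddCommGroup M] [Module R M]
    (T : Submonoid R) (hT : ∀ t ∈ T, ∀ x : M, t • x = 0 → x = 0) (m : M) :
    Ideal.torsionOf (Localization T) (Localization T ⊗[R] M)
        ((1 : Localization T) ⊗ₜ[R] m)
      = (Ideal.torsionOf R M m).map (algebraMap R (Localization T)) :=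
  IsLocalizedModule.torsionOf_apply_eq_map T _ (TensorProduct.mk R (Localization T) M 1) hT m
end

section
/- Let M be an R-module and let x₁, …, xₙ (n ≥ 5) be distinct nonzero elements of M such that [xᵢ : M]·[xⱼ : M] • M = 0 holds exactly when |i − j| = 1 or {i, j} = {1, n} (i.e., these elements induce an n-cycle in the full-annihilating graph), and assume the xᵢ are the only full-annihilators. Then a contradiction follows; that is, the full-annihilating graph of M is never an n-gon for n ≥ 5. -/
/-!
If `x₀ — x₁ — x₂` is a path in the graph, then `[x₀ : M][x₂ : M]M ≠ 0` contains some `z ≠ 0`, and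
`[x₁ : M]` kills `z`, hence kills `[z : M]M ⊆ Rz`; so `z` is adjacent to `x₁` and must be some `xᵢ`.
As `Rz ⊆ Rx₀ ∩ Rx₂`, the ideal `[xᵢ : M]` lies in `[x₀ : M] ∩ [x₂ : M]`, so `xᵢ` is adjacent to every
neighbour of `x₀` and of `x₂`. For a cycle of length at least five these are three vertices,
but a vertex of a cycle has only two neighbours.
-/

/-- The ideal `[x : M]` for an element `x` of a module `M`. -/
def colonIdeal {R : Type*} [CommRing R] {M : Type*} [AddCommGroup M] [Module R M]
    (x : M) : Ideal R :=
  (Submodule.span R ({x} : Set M)).colon ⊤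

namespace Ideal

variable {R M : Type*} [CommRing R] [AddCommGroup M] [Module R M]

theorem mul_smul_eq_bot_of_le {I I' J : Ideal R} {N : Submodule R M} (h : I ≤ I')
    (h' : (I' * J) • N = ⊥) : (I * J) • N = ⊥ :=
  eq_bot_iff.mpr <| (Submodule.smul_mono_left (mul_le_mul_left h J)).trans h'.le

theorem ne_top_of_mul_smul_eq_bot {I J K : Ideal R} {N : Submodule R M}
    (hIJ : (I * J) • N = ⊥) (hIK : (I * K) • N ≠ ⊥) : J ≠ ⊤ := by
  rintro rfl
  rw [mul_top] at hIJ
  exact hIK <| eq_bot_iff.mpr <| (Submodule.smul_mono_left mul_le_left).trans hIJ.le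

theorem smul_span_singleton_eq_bot_of_mem {I J K : Ideal R} {N : Submodule R M} {z : M}
    (hz : z ∈ (I * J) • N) (hIK : (I * K) • N = ⊥) : K • Submodule.span R {z} = ⊥ := by
  rw [eq_bot_iff, ← hIK]
  calc K • Submodule.span R {z} ≤ K • (I * J) • N :=
        Submodule.smul_mono le_rfl ((Submodule.span_singleton_le_iff_mem _ _).mpr hz)
    _ = (K * (I * J)) • N := (Submodule.mul_smul _ _ _).symm
    _ ≤ (I * K) • N := Submodule.smul_mono_left <| by
        rw [mul_left_comm, ← mul_assoc]; exact mul_le_left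

end Ideal

section colonIdeal

variable {R M : Type*} [CommRing R] [AddCommGroup M] [Module R M]

theorem colonIdeal_mono {x y : M} (h : y ∈ Submodule.span R {x}) :
    colonIdeal (R := R) y ≤ colonIdeal x :=
  Submodule.colon_mono ((Submodule.span_singleton_le_iff_mem _ _).mpr h) le_rfl

theorem colonIdeal_smul_top_le_span (x : M) :
    colonIdeal (R := R) x • (⊤ : Submodule R M) ≤ Submodule.span R {x} :=
  Submodule.smul_le.mpr fun _ hr m _ => Submodule.mem_colon.mp hr m trivial

theorem colonIdeal_mul_smul_top_le_span (x : M) (J : Ideal R) :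
    (colonIdeal x * J) • (⊤ : Submodule R M) ≤ Submodule.span R {x} :=
  (Submodule.smul_mono_left Ideal.mul_le_left).trans (colonIdeal_smul_top_le_span x)

theorem colonIdeal_mul_smul_top_eq_bot {K : Ideal R} {z : M}
    (h : K • Submodule.span R {z} = ⊥) : (colonIdeal z * K) • (⊤ : Submodule R M) = ⊥ := by
  rw [eq_bot_iff, ← h, mul_comm, Submodule.mul_smul]
  exact Submodule.smul_mono le_rfl (colonIdeal_smul_top_le_span z)

end colonIdeal

theorem full_annihilating_graph_not_ngon_general
    (R : Type*) [CommRing R] (M : Type*) [AddCommGroup M] [Module R M]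
    (n : ℕ) (hn : 5 ≤ n) (x : Fin n → M)
    (hne : ∀ i, x i ≠ 0)
    (hadj : ∀ i j : Fin n,
      ((colonIdeal (x i) * colonIdeal (x j) : Ideal R)) • (⊤ : Submodule R M) = ⊥ ↔
        (i.val + 1 = j.val ∨ j.val + 1 = i.val ∨
          (i.val = 0 ∧ j.val + 1 = n) ∨ (j.val = 0 ∧ i.val + 1 = n)))
    (honly : ∀ m : M, m ≠ 0 →
      (∃ y : M, y ≠ 0 ∧ colonIdeal (R := R) y ≠ ⊤ ∧
        ((colonIdeal m * colonIdeal y : Ideal R)) • (⊤ : Submodule R M) = ⊥) →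
      ∃ i : Fin n, m = x i) :
    False := by
  set I : Fin n → Ideal R := fun i => colonIdeal (x i)
  have h01 := (hadj ⟨0, by omega⟩ ⟨1, by omega⟩).mpr (.inl rfl)
  have h23 := (hadj ⟨2, by omega⟩ ⟨3, by omega⟩).mpr (.inl rfl)
  have h0n := (hadj ⟨0, by omega⟩ ⟨n - 1, by omega⟩).mpr
    (.inr <| .inr <| .inl ⟨rfl, Nat.sub_add_cancel (by omega)⟩)
  have h02 : (I ⟨0, by omega⟩ * I ⟨2, by omega⟩) • (⊤ : Submodule R M) ≠ ⊥ := fun h => by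
    have := (hadj _ _).mp h
    simp only at this
    omega
  obtain ⟨z, hz, hz0⟩ := Submodule.exists_mem_ne_zero_of_ne_bot h02
  obtain ⟨i, rfl⟩ := honly z hz0 ⟨x ⟨1, by omega⟩, hne _, Ideal.ne_top_of_mul_smul_eq_bot h01 h02,
    colonIdeal_mul_smul_top_eq_bot (Ideal.smul_span_singleton_eq_bot_of_mem hz h01)⟩
  have hi0 : I i ≤ I ⟨0, by omega⟩ := colonIdeal_mono (colonIdeal_mul_smul_top_le_span _ _ hz)
  have hi2 : I i ≤ I ⟨2, by omega⟩ :=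
    colonIdeal_mono (colonIdeal_mul_smul_top_le_span _ _ (mul_comm (I _) (I _) ▸ hz))
  have adj1 := (hadj i _).mp (Ideal.mul_smul_eq_bot_of_le hi0 h01)
  have adj3 := (hadj i _).mp (Ideal.mul_smul_eq_bot_of_le hi2 h23)
  have adjLast := (hadj i _).mp (Ideal.mul_smul_eq_bot_of_le hi0 h0n)
  simp only at adj1 adj3 adjLast
  omega

/-- The full-annihilating graph of a module is never an `n`-gon for `n ≥ 5`:
if distinct nonzero `x₁, …, xₙ` induce exactly an `n`-cycle and are the only
nonzero full-annihilators, a contradiction follows. -/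
theorem full_annihilating_graph_not_ngon
    (R : Type*) [CommRing R] (M : Type*) [AddCommGroup M] [Module R M]
    (n : ℕ) (hn : 5 ≤ n) (x : Fin n → M)
    (hinj : Function.Injective x) (hne : ∀ i, x i ≠ 0)
    (hadj : ∀ i j : Fin n,
      ((colonIdeal (x i) * colonIdeal (x j) : Ideal R)) • (⊤ : Submodule R M) = ⊥ ↔
        (i.val + 1 = j.val ∨ j.val + 1 = i.val ∨
          (i.val = 0 ∧ j.val + 1 = n) ∨ (j.val = 0 ∧ i.val + 1 = n)))
    (honly : ∀ m : M, m ≠ 0 →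
      (∃ y : M, y ≠ 0 ∧ colonIdeal (R := R) y ≠ ⊤ ∧
        ((colonIdeal m * colonIdeal y : Ideal R)) • (⊤ : Submodule R M) = ⊥) →
      ∃ i : Fin n, m = x i) :
    False :=
  full_annihilating_graph_not_ngon_general R M n hn x hne hadj honly
end
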